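/- Let G be the subgroup of GL(3,ℂ) generated by R₁, R₂, R₃. For all v₁, v₂ ∈ ℂ, the translation matrix T_{(v₁,v₂)} belongs to G if and only if there exist integers a, b, c, d with v₁ = a + b·i√2 and v₂ = c + d·i√2. (Equivalently: the kernel of the linear-part homomorphism on G is exactly the group of translations by the lattice Λ = (ℤ ⊕ i√2·ℤ)².) -/

import Mathlib

open Matrix

noncomputable section

/-- i√2. -/
def s2 : ℂ := Complex.I * Real.sqrt 2

/-- R₁ = [[1,0,0],[0,1,0],[0,1−i√2,−1]]. -/
def R₁ : Matrix (Fin 3) (Fin 3) ℂ := !![1, 0, 0; 0, 1, 0; 0, 1 - s2, -1]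

/-- R₂ = [[1,0,0],[0,−1+i√2,2],[0,1+i√2,1−i√2]]. -/
def R₂ : Matrix (Fin 3) (Fin 3) ℂ := !![1, 0, 0; 0, -1 + s2, 2; 0, 1 + s2, 1 - s2]

/-- R₃ = [[1,0,0],[(1+i√2)/2,1,−1−i√2],[1,0,−1]]. -/
def R₃ : Matrix (Fin 3) (Fin 3) ℂ := !![1, 0, 0; (1 + s2) / 2, 1, -1 - s2; 1, 0, -1]

/-- The translation matrix T_v for v = (v₁, v₂). -/
def T (v₁ v₂ : ℂ) : Matrix (Fin 3) (Fin 3) ℂ := !![1, 0, 0; v₁, 1, 0; v₂, 0, 1]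

/-- A₁, the linear part of R₁. -/
def A₁ : Matrix (Fin 2) (Fin 2) ℂ := !![1, 0; 1 - s2, -1]

/-- A₂, the linear part of R₂. -/
def A₂ : Matrix (Fin 2) (Fin 2) ℂ := !![-1 + s2, 2; 1 + s2, 1 - s2]

/-- A₃, the linear part of R₃. -/
def A₃ : Matrix (Fin 2) (Fin 2) ℂ := !![1, -1 - s2; 0, -1]

end

open scoped MatrixGroups

/-- The subgroup of GL(3,ℂ) generated by (the invertible-matrix lifts of) R₁, R₂, R₃. -/
noncomputable def G : Subgroup (GL (Fin 3) ℂ) :=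
  Subgroup.closure {g : GL (Fin 3) ℂ | (g : Matrix (Fin 3) (Fin 3) ℂ) ∈ ({R₁, R₂, R₃} : Set _)}

/-!
The elements of `G` are affine maps `p ↦ b + A p` of `ℂ²` with `A ∈ GL₂(ℤ[√-2])`. Conjugating
a translation `T_v` by such a map gives `T_{A v}`, so the translation vectors of `G` form a group
stable under `A₁, A₂, A₃`. The glide reflection `R₁R₂R₃R₁R₂` squares to `T_{(1, -i√2)}`, and this
vector together with a few of its images under `A₁, A₂` spans `Λ = ℤ[√-2]²`.

Conversely, `G` maps into itself the set of points `q / 2`, `q ∈ Λ`, whose class `q mod 2` is one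
of the six classes in `(ℤ[√-2]/2)²` reached by the orbit of `0`; this is checked on the generators
modulo 2. A translation `T_v ∈ G` then sends `0`, `(0, i√2)/2` and `(1, i√2)/2` into this set, and
a finite check forces `2v ≡ 0 mod 2`, i.e. `v ∈ Λ`.
-/

theorem Matrix.mapsTo_mulVec_of_mem_closure {n R : Type*} [Fintype n] [DecidableEq n]
    [CommRing R] {s : Set (GL n R)} {S : Set (n → R)}
    (hs : ∀ g ∈ s, Set.MapsTo ((g : Matrix n n R) *ᵥ ·) S S ∧
      Set.MapsTo ((g⁻¹ : GL n R) *ᵥ ·) S S)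
    {g : GL n R} (hg : g ∈ Subgroup.closure s) : Set.MapsTo ((g : Matrix n n R) *ᵥ ·) S S := by
  induction hg using Subgroup.closure_induction'' with
  | mem g hg => exact (hs g hg).1
  | inv_mem g hg => exact (hs g hg).2
  | one => intro x hx; simpa using hx
  | mul g h _ _ hg hh => intro x hx; simpa [mulVec_mulVec] using hg (hh hx)

section Affine

variable {R : Type*} [CommRing R]

def affineMatrix (b : Fin 2 → R) (A : Matrix (Fin 2) (Fin 2) R) : Matrix (Fin 3) (Fin 3) R :=
  !![1, 0, 0; b 0, A 0 0, A 0 1; b 1, A 1 0, A 1 1]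

theorem affineMatrix_mul (b c : Fin 2 → R) (A B : Matrix (Fin 2) (Fin 2) R) :
    affineMatrix b A * affineMatrix c B = affineMatrix (b + A *ᵥ c) (A * B) := by
  ext i j
  fin_cases i <;> fin_cases j <;> simp [affineMatrix, mul_apply, Fin.sum_univ_succ]

theorem affineMatrix_zero_one : affineMatrix (0 : Fin 2 → R) 1 = 1 := by
  ext i j
  fin_cases i <;> fin_cases j <;> simp [affineMatrix]

theorem affineMatrix_mul_translation (b v : Fin 2 → R) (A : Matrix (Fin 2) (Fin 2) R) :
    affineMatrix b A * affineMatrix v 1 = affineMatrix (A *ᵥ v) 1 * affineMatrix b A := by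
  rw [affineMatrix_mul, affineMatrix_mul, one_mulVec, mul_one, one_mul, add_comm]

def translations (H : Subgroup (GL (Fin 3) R)) : AddSubgroup (Fin 2 → R) where
  carrier := {v | ∃ g ∈ H, (g : Matrix (Fin 3) (Fin 3) R) = affineMatrix v 1}
  zero_mem' := ⟨1, H.one_mem, affineMatrix_zero_one.symm⟩
  add_mem' := by
    rintro v w ⟨g, hg, hgv⟩ ⟨h, hh, hhw⟩
    refine ⟨g * h, H.mul_mem hg hh, ?_⟩
    rw [Units.val_mul, hgv, hhw, affineMatrix_mul, one_mulVec, mul_one]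
  neg_mem' := by
    rintro v ⟨g, hg, hgv⟩
    refine ⟨g⁻¹, H.inv_mem hg, Units.inv_eq_of_mul_eq_one_right ?_⟩
    rw [hgv, affineMatrix_mul, one_mulVec, mul_one, add_neg_cancel, affineMatrix_zero_one]

theorem mulVec_mem_translations {H : Subgroup (GL (Fin 3) R)} {g : GL (Fin 3) R}
    {b : Fin 2 → R} {A : Matrix (Fin 2) (Fin 2) R} (hg : g ∈ H)
    (hgA : (g : Matrix (Fin 3) (Fin 3) R) = affineMatrix b A) {v : Fin 2 → R}
    (hv : v ∈ translations H) : A *ᵥ v ∈ translations H := by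
  obtain ⟨t, ht, htv⟩ := hv
  refine ⟨g * t * g⁻¹, H.mul_mem (H.mul_mem hg ht) (H.inv_mem hg), ?_⟩
  rw [Units.val_mul, Units.val_mul, htv, hgA, affineMatrix_mul_translation, mul_assoc, ← hgA,
    ← Units.val_mul, mul_inv_cancel, Units.val_one, mul_one]

end Affine

theorem s2_mul_self : s2 * s2 = -2 := by
  rw [s2, mul_mul_mul_comm, Complex.I_mul_I, ← Complex.ofReal_mul,
    Real.mul_self_sqrt zero_le_two]
  push_cast
  ring

theorem T_eq_affineMatrix (v₁ v₂ : ℂ) : T v₁ v₂ = affineMatrix ![v₁, v₂] 1 := by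
  ext i j
  fin_cases i <;> fin_cases j <;> rfl

theorem R₁_eq_affineMatrix : R₁ = affineMatrix 0 A₁ := by
  ext i j
  fin_cases i <;> fin_cases j <;> rfl

theorem R₂_eq_affineMatrix : R₂ = affineMatrix 0 A₂ := by
  ext i j
  fin_cases i <;> fin_cases j <;> rfl

theorem R₃_eq_affineMatrix : R₃ = affineMatrix ![(1 + s2) / 2, 1] A₃ := by
  ext i j
  fin_cases i <;> fin_cases j <;> rfl

theorem R₁_mul_self : R₁ * R₁ = 1 := by
  rw [R₁_eq_affineMatrix, affineMatrix_mul, mulVec_zero, add_zero, ← affineMatrix_zero_one]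
  congr 1
  ext i j
  fin_cases i <;> fin_cases j <;> simp [A₁, mul_apply]

theorem R₂_mul_self : R₂ * R₂ = 1 := by
  rw [R₂_eq_affineMatrix, affineMatrix_mul, mulVec_zero, add_zero, ← affineMatrix_zero_one]
  congr 1
  ext i j
  fin_cases i <;> fin_cases j <;> simp [A₂, mul_apply] <;> grind [s2_mul_self]

theorem R₃_mul_self : R₃ * R₃ = 1 := by
  rw [R₃_eq_affineMatrix, affineMatrix_mul, ← affineMatrix_zero_one]
  congr 1
  · ext i
    fin_cases i <;> simp [A₃]
    ring
  · ext i j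
    fin_cases i <;> fin_cases j <;> simp [A₃, mul_apply]
    ring

theorem mul_self_eq_one_of_mem_generators {M : Matrix (Fin 3) (Fin 3) ℂ}
    (hM : M ∈ ({R₁, R₂, R₃} : Set _)) : M * M = 1 := by
  rcases hM with rfl | rfl | rfl
  exacts [R₁_mul_self, R₂_mul_self, R₃_mul_self]

theorem exists_mem_G_val_eq {M : Matrix (Fin 3) (Fin 3) ℂ} (hM : M ∈ ({R₁, R₂, R₃} : Set _)) :
    ∃ g ∈ G, (g : Matrix (Fin 3) (Fin 3) ℂ) = M :=
  ⟨⟨M, M, mul_self_eq_one_of_mem_generators hM, mul_self_eq_one_of_mem_generators hM⟩,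
    Subgroup.subset_closure hM, rfl⟩

-- No shorter word in the generators is a nontrivial translation.
theorem glide_sq : (R₁ * R₂ * R₃ * R₁ * R₂) ^ 2 = affineMatrix ![1, -s2] 1 := by
  have hglide : R₁ * R₂ * R₃ * R₁ * R₂ =
      affineMatrix ![1 / 2, -s2 / 2] !![-1 - s2, -1 + s2; -2, 1 + s2] := by
    simp only [R₁_eq_affineMatrix, R₂_eq_affineMatrix, R₃_eq_affineMatrix, affineMatrix_mul]
    congr 1
    · ext i
      fin_cases i <;> simp [A₁, A₂, A₃] <;> grind [s2_mul_self]
    · ext i j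
      fin_cases i <;> fin_cases j <;> simp [A₁, A₂, A₃, mul_apply] <;> grind [s2_mul_self]
  rw [sq, hglide, affineMatrix_mul]
  congr 1
  · ext i
    fin_cases i <;> simp <;> grind [s2_mul_self]
  · ext i j
    fin_cases i <;> fin_cases j <;> simp [mul_apply] <;> grind [s2_mul_self]

theorem glide_sq_mem_translations : ![1, -s2] ∈ translations G := by
  obtain ⟨g₁, hg₁, h₁⟩ := exists_mem_G_val_eq (M := R₁) (by simp)
  obtain ⟨g₂, hg₂, h₂⟩ := exists_mem_G_val_eq (M := R₂) (by simp)
  obtain ⟨g₃, hg₃, h₃⟩ := exists_mem_G_val_eq (M := R₃) (by simp)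
  refine ⟨(g₁ * g₂ * g₃ * g₁ * g₂) ^ 2,
    pow_mem (mul_mem (mul_mem (mul_mem (mul_mem hg₁ hg₂) hg₃) hg₁) hg₂) 2, ?_⟩
  rw [← glide_sq, ← h₁, ← h₂, ← h₃]
  push_cast
  rfl

theorem lattice_mem_translations (a b c d : ℤ) :
    ![a + b * s2, c + d * s2] ∈ translations G := by
  set t : Fin 2 → ℂ := ![1, -s2]
  -- `A₁ t = (1, 1)`, `w = A₁ t + A₂ t = (-i√2, 0)` and `A₁ w = (-i√2, -2 - i√2)`
  have hspan : ![a + b * s2, c + d * s2] =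
      (c - a - 2 * d) • t + (2 * a - c + 2 * d) • (A₁ *ᵥ t)
        + (a - c + d) • (A₁ *ᵥ (A₁ *ᵥ t + A₂ *ᵥ t)) - (a + b - c + d) • (A₁ *ᵥ t + A₂ *ᵥ t) := by
    ext i
    fin_cases i <;> simp [t, A₁, A₂, -cons_mulVec, -mulVec_cons] <;> grind [s2_mul_self]
  obtain ⟨g₁, hg₁, h₁⟩ := exists_mem_G_val_eq (M := R₁) (by simp)
  obtain ⟨g₂, hg₂, h₂⟩ := exists_mem_G_val_eq (M := R₂) (by simp)
  rw [R₁_eq_affineMatrix] at h₁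
  rw [R₂_eq_affineMatrix] at h₂
  have ht : t ∈ translations G := glide_sq_mem_translations
  have ht₁ := mulVec_mem_translations hg₁ h₁ ht
  have hw := add_mem ht₁ (mulVec_mem_translations hg₂ h₂ ht)
  have hw₁ := mulVec_mem_translations hg₁ h₁ hw
  rw [hspan]
  exact sub_mem (add_mem (add_mem (zsmul_mem ht _) (zsmul_mem ht₁ _)) (zsmul_mem hw₁ _))
    (zsmul_mem hw _)

section Orbit

open Zsqrtd

noncomputable def toComplex : ℤ√(-2) →+* ℂ := lift ⟨s2, by rw [s2_mul_self]; norm_num⟩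

theorem toComplex_apply (q : ℤ√(-2)) : toComplex q = q.re + q.im * s2 :=
  lift_apply_apply _ q

theorem toComplex_sqrtd : toComplex sqrtd = s2 := by
  simp [toComplex_apply]

theorem toComplex_injective : Function.Injective toComplex :=
  lift_injective _ fun n h => by nlinarith [mul_self_nonneg n]

noncomputable def halfPoint (q₁ q₂ : ℤ√(-2)) : Fin 3 → ℂ :=
  ![1, toComplex q₁ / 2, toComplex q₂ / 2]

theorem halfPoint_injective {q₁ q₂ p₁ p₂ : ℤ√(-2)} (h : halfPoint q₁ q₂ = halfPoint p₁ p₂) :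
    q₁ = p₁ ∧ q₂ = p₂ := by
  have h₁ := congr_fun h 1
  have h₂ := congr_fun h 2
  simp [halfPoint] at h₁ h₂
  exact ⟨toComplex_injective h₁, toComplex_injective h₂⟩

theorem T_mulVec_halfPoint (q₁ q₂ p₁ p₂ : ℤ√(-2)) :
    T (toComplex q₁ / 2) (toComplex q₂ / 2) *ᵥ halfPoint p₁ p₂ =
      halfPoint (q₁ + p₁) (q₂ + p₂) := by
  ext i
  fin_cases i <;> simp [T, halfPoint, mulVec, dotProduct, Fin.sum_univ_three] <;> ring

def residues (q₁ q₂ : ℤ√(-2)) : ZMod 2 × ZMod 2 × ZMod 2 × ZMod 2 :=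
  (q₁.re, q₁.im, q₂.re, q₂.im)

theorem residues_add (q₁ q₂ p₁ p₂ : ℤ√(-2)) :
    residues (q₁ + p₁) (q₂ + p₂) = residues q₁ q₂ + residues p₁ p₂ := by
  simp [residues]

theorem exists_eq_two_mul_of_residues {q : ℤ√(-2)} (hre : (q.re : ZMod 2) = 0)
    (him : (q.im : ZMod 2) = 0) : ∃ r, q = 2 * r := by
  obtain ⟨a, ha⟩ := (ZMod.intCast_zmod_eq_zero_iff_dvd _ 2).mp hre
  obtain ⟨b, hb⟩ := (ZMod.intCast_zmod_eq_zero_iff_dvd _ 2).mp him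
  exact ⟨⟨a, b⟩, Zsqrtd.ext (by simp [ha]) (by simp [hb])⟩

-- The residues of `2 p` for the points `p` in the `G`-orbit of `0`.
def orbitResidues : Finset (ZMod 2 × ZMod 2 × ZMod 2 × ZMod 2) :=
  {(0, 0, 0, 0), (0, 0, 0, 1), (1, 0, 0, 1), (1, 0, 1, 0), (1, 1, 0, 0), (1, 1, 1, 0)}

def orbitSet : Set (Fin 3 → ℂ) :=
  {x | ∃ q₁ q₂, residues q₁ q₂ ∈ orbitResidues ∧ x = halfPoint q₁ q₂}

theorem halfPoint_mem_orbitSet_iff {q₁ q₂ : ℤ√(-2)} :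
    halfPoint q₁ q₂ ∈ orbitSet ↔ residues q₁ q₂ ∈ orbitResidues := by
  refine ⟨?_, fun h => ⟨q₁, q₂, h, rfl⟩⟩
  rintro ⟨p₁, p₂, hp, h⟩
  obtain ⟨rfl, rfl⟩ := halfPoint_injective h
  exact hp

theorem mapsTo_orbitSet_of_mulVec_halfPoint {M : Matrix (Fin 3) (Fin 3) ℂ}
    (f₁ f₂ : ℤ√(-2) → ℤ√(-2) → ℤ√(-2))
    (hM : ∀ q₁ q₂, M *ᵥ halfPoint q₁ q₂ = halfPoint (f₁ q₁ q₂) (f₂ q₁ q₂))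
    (hf : ∀ q₁ q₂, residues q₁ q₂ ∈ orbitResidues →
      residues (f₁ q₁ q₂) (f₂ q₁ q₂) ∈ orbitResidues) :
    Set.MapsTo (M *ᵥ ·) orbitSet orbitSet := by
  rintro _ ⟨q₁, q₂, hq, rfl⟩
  exact ⟨_, _, hf q₁ q₂ hq, hM q₁ q₂⟩

theorem R₁_mapsTo_orbitSet : Set.MapsTo (R₁ *ᵥ ·) orbitSet orbitSet := by
  refine mapsTo_orbitSet_of_mulVec_halfPoint (fun q₁ _ => q₁)
    (fun q₁ q₂ => (1 - sqrtd) * q₁ - q₂) (fun q₁ q₂ => ?_) (fun q₁ q₂ hq => ?_)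
  · ext i
    fin_cases i <;> simp [R₁, halfPoint, mulVec, dotProduct, Fin.sum_univ_three, toComplex_sqrtd]
    ring
  · simp only [residues, re_sub, im_sub, re_mul, im_mul, re_one, im_one, re_sqrtd,
      im_sqrtd] at hq ⊢
    push_cast
    generalize (q₁.re : ZMod 2) = a, (q₁.im : ZMod 2) = b, (q₂.re : ZMod 2) = c,
      (q₂.im : ZMod 2) = d at hq ⊢
    revert a b c d
    decide

theorem R₂_mapsTo_orbitSet : Set.MapsTo (R₂ *ᵥ ·) orbitSet orbitSet := by
  refine mapsTo_orbitSet_of_mulVec_halfPoint (fun q₁ q₂ => (-1 + sqrtd) * q₁ + 2 * q₂)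
    (fun q₁ q₂ => (1 + sqrtd) * q₁ + (1 - sqrtd) * q₂) (fun q₁ q₂ => ?_) (fun q₁ q₂ hq => ?_)
  · ext i
    fin_cases i <;>
      simp [R₂, halfPoint, mulVec, dotProduct, Fin.sum_univ_three, toComplex_sqrtd, map_ofNat] <;>
      ring
  · simp only [residues, re_add, im_add, re_sub, im_sub, re_mul, im_mul, re_one, im_one,
      re_sqrtd, im_sqrtd, re_neg, im_neg, re_ofNat, im_ofNat] at hq ⊢
    push_cast
    generalize (q₁.re : ZMod 2) = a, (q₁.im : ZMod 2) = b, (q₂.re : ZMod 2) = c,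
      (q₂.im : ZMod 2) = d at hq ⊢
    revert a b c d
    decide

theorem R₃_mapsTo_orbitSet : Set.MapsTo (R₃ *ᵥ ·) orbitSet orbitSet := by
  refine mapsTo_orbitSet_of_mulVec_halfPoint (fun q₁ q₂ => 1 + sqrtd + q₁ - (1 + sqrtd) * q₂)
    (fun _ q₂ => 2 - q₂) (fun q₁ q₂ => ?_) (fun q₁ q₂ hq => ?_)
  · ext i
    fin_cases i <;>
      simp [R₃, halfPoint, mulVec, dotProduct, Fin.sum_univ_three, toComplex_sqrtd, map_ofNat] <;>
      ring
  · simp only [residues, re_add, im_add, re_sub, im_sub, re_mul, im_mul, re_one, im_one,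
      re_sqrtd, im_sqrtd, re_ofNat, im_ofNat] at hq ⊢
    push_cast
    generalize (q₁.re : ZMod 2) = a, (q₁.im : ZMod 2) = b, (q₂.re : ZMod 2) = c,
      (q₂.im : ZMod 2) = d at hq ⊢
    revert a b c d
    decide

theorem mapsTo_orbitSet_of_mem_G {g : GL (Fin 3) ℂ} (hg : g ∈ G) :
    Set.MapsTo ((g : Matrix (Fin 3) (Fin 3) ℂ) *ᵥ ·) orbitSet orbitSet := by
  have hgen {M : Matrix (Fin 3) (Fin 3) ℂ} (hM : M ∈ ({R₁, R₂, R₃} : Set _)) :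
      Set.MapsTo (M *ᵥ ·) orbitSet orbitSet := by
    rcases hM with rfl | rfl | rfl
    exacts [R₁_mapsTo_orbitSet, R₂_mapsTo_orbitSet, R₃_mapsTo_orbitSet]
  refine Matrix.mapsTo_mulVec_of_mem_closure (fun g hg => ?_) hg
  rw [Units.inv_eq_of_mul_eq_one_right (mul_self_eq_one_of_mem_generators hg)]
  exact ⟨hgen hg, hgen hg⟩

theorem eq_zero_of_add_mem_orbitResidues {r : ZMod 2 × ZMod 2 × ZMod 2 × ZMod 2}
    (h : r ∈ orbitResidues) (h₁ : r + residues 0 sqrtd ∈ orbitResidues)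
    (h₂ : r + residues 1 sqrtd ∈ orbitResidues) : r = 0 := by
  have key : ∀ r ∈ orbitResidues, r + residues 0 sqrtd ∈ orbitResidues →
      r + residues 1 sqrtd ∈ orbitResidues → r = 0 := by
    decide
  exact key r h h₁ h₂

theorem exists_eq_toComplex_of_mapsTo {v₁ v₂ : ℂ}
    (h : Set.MapsTo (T v₁ v₂ *ᵥ ·) orbitSet orbitSet) :
    ∃ r₁ r₂ : ℤ√(-2), v₁ = toComplex r₁ ∧ v₂ = toComplex r₂ := by
  obtain ⟨q₁, q₂, hq, hv⟩ :=
    h ((halfPoint_mem_orbitSet_iff (q₁ := 0) (q₂ := 0)).mpr (by decide))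
  have hv₁ : v₁ = toComplex q₁ / 2 := by
    simpa [T, halfPoint, mulVec, dotProduct, Fin.sum_univ_three] using congr_fun hv 1
  have hv₂ : v₂ = toComplex q₂ / 2 := by
    simpa [T, halfPoint, mulVec, dotProduct, Fin.sum_univ_three] using congr_fun hv 2
  subst hv₁ hv₂
  have h₁ := h ((halfPoint_mem_orbitSet_iff (q₁ := 0) (q₂ := sqrtd)).mpr (by decide))
  have h₂ := h ((halfPoint_mem_orbitSet_iff (q₁ := 1) (q₂ := sqrtd)).mpr (by decide))
  simp only [T_mulVec_halfPoint, halfPoint_mem_orbitSet_iff, residues_add] at h₁ h₂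
  have hzero := eq_zero_of_add_mem_orbitResidues hq h₁ h₂
  simp only [residues, Prod.ext_iff] at hzero
  obtain ⟨r₁, rfl⟩ := exists_eq_two_mul_of_residues hzero.1 hzero.2.1
  obtain ⟨r₂, rfl⟩ := exists_eq_two_mul_of_residues hzero.2.2.1 hzero.2.2.2
  exact ⟨r₁, r₂, by rw [map_mul, map_ofNat]; ring, by rw [map_mul, map_ofNat]; ring⟩

end Orbit

/-- a translation T_{(v₁,v₂)} lies in G iff v₁ and v₂ lie in the lattice
ℤ ⊕ i√2·ℤ; i.e. the kernel of the linear-part homomorphism is T_Λ with Λ = (ℤ ⊕ i√2ℤ)². -/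
theorem stmt_15 (v₁ v₂ : ℂ) :
    (∃ g : GL (Fin 3) ℂ, g ∈ G ∧ (g : Matrix (Fin 3) (Fin 3) ℂ) = T v₁ v₂) ↔
    ∃ a b c d : ℤ, v₁ = (a : ℂ) + (b : ℂ) * s2 ∧ v₂ = (c : ℂ) + (d : ℂ) * s2 := by
  constructor
  · rintro ⟨g, hg, hgT⟩
    obtain ⟨r₁, r₂, rfl, rfl⟩ := exists_eq_toComplex_of_mapsTo (hgT ▸ mapsTo_orbitSet_of_mem_G hg)
    exact ⟨r₁.re, r₁.im, r₂.re, r₂.im, toComplex_apply r₁, toComplex_apply r₂⟩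
  · rintro ⟨a, b, c, d, rfl, rfl⟩
    obtain ⟨g, hg, hgT⟩ := lattice_mem_translations a b c d
    exact ⟨g, hg, by rw [hgT, T_eq_affineMatrix]⟩
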